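/- arXiv:2207.04475 — 2 statements merged into one kernel-verified Lean document; each statement's English description precedes it below -/
import Mathlib

section
/- Let $Q$ be the symmetric positive definite solution of $\bar{A}^\top Q + Q\bar{A} = I$, set $a = \|Q\|^{-1}/2$ and $\alpha_\infty = \tfrac12 \|\bar{A}\|_Q^{-2}\|Q\|^{-1} \wedge \|Q\|$, where $\|M\|_Q = \max_{\|x\|_Q = 1}\|Mx\|_Q$ and $\|x\|_Q^2 = x^\top Q x$. Then for every $\alpha \in [0,\alpha_\infty]$ one has $\|I - \alpha\bar{A}\|_Q^2 \le 1 - a\alpha$ and $\alpha a \le 1/2$. -/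
open Matrix

/-- Spectral norm of a real matrix: operator norm of the induced map on Euclidean space. -/
noncomputable def specNorm {d : ℕ} (M : Matrix (Fin d) (Fin d) ℝ) : ℝ :=
  ‖LinearMap.toContinuousLinearMap (Matrix.toEuclideanLin M)‖

/-- The `Q`-weighted vector norm `‖x‖_Q = √(xᵀ Q x)`. -/
noncomputable def qVecNorm {d : ℕ} (Q : Matrix (Fin d) (Fin d) ℝ) (x : Fin d → ℝ) : ℝ :=
  Real.sqrt (x ⬝ᵥ Q.mulVec x)

/-- The operator norm induced by the `Q`-weighted norm: `‖M‖_Q = max_{‖x‖_Q = 1} ‖Mx‖_Q`. -/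
noncomputable def qOpNorm {d : ℕ} (Q M : Matrix (Fin d) (Fin d) ℝ) : ℝ :=
  sSup ((fun x => qVecNorm Q (M.mulVec x)) '' {x | qVecNorm Q x = 1})

namespace LyapAux

lemma dot_self_nonneg (x : Fin d → ℝ) : 0 ≤ x ⬝ᵥ x :=
  Finset.sum_nonneg fun i _ => mul_self_nonneg _

lemma norm_equiv_symm (x : Fin d → ℝ) :
    ‖(WithLp.equiv 2 (Fin d → ℝ)).symm x‖ = Real.sqrt (x ⬝ᵥ x) := by
  rw [EuclideanSpace.norm_eq]
  congr 1
  simp [dotProduct, sq]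

lemma spec_mulVec_le (M : Matrix (Fin d) (Fin d) ℝ) (x : Fin d → ℝ) :
    Real.sqrt (M.mulVec x ⬝ᵥ M.mulVec x) ≤ specNorm M * Real.sqrt (x ⬝ᵥ x) := by
  have h := (LinearMap.toContinuousLinearMap (toEuclideanLin M)).le_opNorm
      ((WithLp.equiv 2 (Fin d → ℝ)).symm x)
  rw [LinearMap.coe_toContinuousLinearMap'] at h
  change ‖(WithLp.equiv 2 (Fin d → ℝ)).symm (Matrix.toLin' M x)‖ ≤ _ at h
  rw [Matrix.toLin'_apply, norm_equiv_symm,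
    norm_equiv_symm] at h
  exact h

lemma dot_mulVec_le_spec (M : Matrix (Fin d) (Fin d) ℝ) (x : Fin d → ℝ) :
    x ⬝ᵥ M.mulVec x ≤ specNorm M * (x ⬝ᵥ x) := by
  have h1 : x ⬝ᵥ M.mulVec x =
      inner ℝ ((WithLp.equiv 2 (Fin d → ℝ)).symm x)
        ((WithLp.equiv 2 (Fin d → ℝ)).symm (M.mulVec x)) := by
    show _ = M.mulVec x ⬝ᵥ star x; rw [star_trivial, dotProduct_comm]
  have h2 := real_inner_le_norm ((WithLp.equiv 2 (Fin d → ℝ)).symm x)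
      ((WithLp.equiv 2 (Fin d → ℝ)).symm (M.mulVec x))
  rw [norm_equiv_symm, norm_equiv_symm] at h2
  have h3 := spec_mulVec_le M x
  have h4 : Real.sqrt (x ⬝ᵥ x) * Real.sqrt (x ⬝ᵥ x) = x ⬝ᵥ x :=
    Real.mul_self_sqrt (dot_self_nonneg x)
  have h0 : 0 ≤ Real.sqrt (x ⬝ᵥ x) := Real.sqrt_nonneg _
  rw [← h1] at h2
  calc x ⬝ᵥ M.mulVec x ≤ Real.sqrt (x ⬝ᵥ x) * Real.sqrt (M.mulVec x ⬝ᵥ M.mulVec x) := h2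
    _ ≤ Real.sqrt (x ⬝ᵥ x) * (specNorm M * Real.sqrt (x ⬝ᵥ x)) :=
        mul_le_mul_of_nonneg_left h3 h0
    _ = specNorm M * (Real.sqrt (x ⬝ᵥ x) * Real.sqrt (x ⬝ᵥ x)) := by ring
    _ = specNorm M * (x ⬝ᵥ x) := by rw [h4]


variable {d : ℕ} {Q : Matrix (Fin d) (Fin d) ℝ}

lemma exists_sqrt {Q : Matrix (Fin d) (Fin d) ℝ} (hQpos : Q.PosDef) :
    ∃ S : Matrix (Fin d) (Fin d) ℝ, Sᵀ = S ∧ S * S = Q ∧ S⁻¹ * S = 1 := by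
  open scoped MatrixOrder in
  refine ⟨CFC.sqrt Q, ?_, CFC.sqrt_mul_sqrt_self Q hQpos.posSemidef.nonneg, ?_⟩
  · have h := (CFC.sqrt_nonneg Q).posSemidef.1
    rwa [Matrix.IsHermitian, conjTranspose_eq_transpose_of_trivial] at h
  · refine nonsing_inv_mul _ (isUnit_iff_ne_zero.2 ?_)
    intro h
    have h2 : CFC.sqrt Q * CFC.sqrt Q = Q :=
      open scoped MatrixOrder in CFC.sqrt_mul_sqrt_self Q hQpos.posSemidef.nonneg
    have h3 := hQpos.det_pos
    rw [← h2, det_mul, h, mul_zero] at h3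
    exact lt_irrefl _ h3

variable {Q S : Matrix (Fin d) (Fin d) ℝ}

lemma qVecNorm_eq_sqrt (hSymm : Sᵀ = S) (hSS : S * S = Q) (x : Fin d → ℝ) :
    qVecNorm Q x = Real.sqrt (S.mulVec x ⬝ᵥ S.mulVec x) := by
  rw [qVecNorm, ← hSS, ← mulVec_mulVec, dotProduct_mulVec]
  nth_rewrite 1 [← hSymm]
  rw [vecMul_transpose]

lemma eNorm_le_qVecNorm (hSymm : Sᵀ = S) (hSS : S * S = Q) (hinv : S⁻¹ * S = 1)
    (x : Fin d → ℝ) :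
    Real.sqrt (x ⬝ᵥ x) ≤ specNorm S⁻¹ * qVecNorm Q x := by
  have hx : S⁻¹.mulVec (S.mulVec x) = x := by
    rw [mulVec_mulVec, hinv, one_mulVec]
  calc Real.sqrt (x ⬝ᵥ x) = Real.sqrt (S⁻¹.mulVec (S.mulVec x) ⬝ᵥ S⁻¹.mulVec (S.mulVec x)) := by
        rw [hx]
    _ ≤ specNorm S⁻¹ * Real.sqrt (S.mulVec x ⬝ᵥ S.mulVec x) := spec_mulVec_le _ _
    _ = specNorm S⁻¹ * qVecNorm Q x := by rw [qVecNorm_eq_sqrt hSymm hSS]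

lemma qVecNorm_mulVec_le (hSymm : Sᵀ = S) (hSS : S * S = Q) (hinv : S⁻¹ * S = 1)
    (M : Matrix (Fin d) (Fin d) ℝ) (x : Fin d → ℝ) :
    qVecNorm Q (M.mulVec x) ≤ specNorm (S * M * S⁻¹) * qVecNorm Q x := by
  have hm : S * M * S⁻¹ * S = S * M := by
    rw [mul_assoc (S * M), hinv, mul_one]
  have key : (S * M * S⁻¹).mulVec (S.mulVec x) = S.mulVec (M.mulVec x) := by
    rw [mulVec_mulVec, hm, ← mulVec_mulVec]
  calc qVecNorm Q (M.mulVec x)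
      = Real.sqrt (S.mulVec (M.mulVec x) ⬝ᵥ S.mulVec (M.mulVec x)) :=
        qVecNorm_eq_sqrt hSymm hSS _
    _ = Real.sqrt ((S * M * S⁻¹).mulVec (S.mulVec x) ⬝ᵥ (S * M * S⁻¹).mulVec (S.mulVec x)) := by
        rw [key]
    _ ≤ specNorm (S * M * S⁻¹) * Real.sqrt (S.mulVec x ⬝ᵥ S.mulVec x) := spec_mulVec_le _ _
    _ = specNorm (S * M * S⁻¹) * qVecNorm Q x := by rw [qVecNorm_eq_sqrt hSymm hSS]

lemma bddAbove_q (hSymm : Sᵀ = S) (hSS : S * S = Q) (hinv : S⁻¹ * S = 1)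
    (M : Matrix (Fin d) (Fin d) ℝ) :
    BddAbove ((fun x => qVecNorm Q (M.mulVec x)) '' {x | qVecNorm Q x = 1}) := by
  refine ⟨specNorm (S * M * S⁻¹), ?_⟩
  rintro v ⟨x, hx, rfl⟩
  have := qVecNorm_mulVec_le hSymm hSS hinv M x
  rwa [Set.mem_setOf_eq.mp hx, mul_one] at this

lemma le_qOpNorm (hSymm : Sᵀ = S) (hSS : S * S = Q) (hinv : S⁻¹ * S = 1)
    (M : Matrix (Fin d) (Fin d) ℝ) {x : Fin d → ℝ} (hx : qVecNorm Q x = 1) :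
    qVecNorm Q (M.mulVec x) ≤ qOpNorm Q M :=
  le_csSup (bddAbove_q hSymm hSS hinv M) ⟨x, hx, rfl⟩

lemma qOpNorm_le {M : Matrix (Fin d) (Fin d) ℝ} {b : ℝ} (hb : 0 ≤ b)
    (h : ∀ x : Fin d → ℝ, qVecNorm Q x = 1 → qVecNorm Q (M.mulVec x) ≤ b) :
    qOpNorm Q M ≤ b :=
  Real.sSup_le (by rintro v ⟨x, hx, rfl⟩; exact h x hx) hb

lemma qOpNorm_nonneg (M : Matrix (Fin d) (Fin d) ℝ) : 0 ≤ qOpNorm Q M :=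
  Real.sSup_nonneg (by rintro v ⟨x, hx, rfl⟩; exact Real.sqrt_nonneg _)

end LyapAux

/-- Lyapunov contraction: with `a = ‖Q‖⁻¹/2` and
`αinf = ((1/2)‖Ā‖_Q⁻² ‖Q‖⁻¹) ∧ ‖Q‖`, for every `α ∈ [0, αinf]` one has
`‖I - α Ā‖_Q² ≤ 1 - aα` and `αa ≤ 1/2`. -/
theorem lyapunov_contraction {d : ℕ}
    (A Q : Matrix (Fin d) (Fin d) ℝ)
    (hQsymm : Q.IsSymm) (hQpos : Q.PosDef)
    (hLyap : Aᵀ * Q + Q * A = 1)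
    (a αinf : ℝ)
    (ha : a = (specNorm Q)⁻¹ / 2)
    (hα : αinf = min ((1/2) * ((qOpNorm Q A)⁻¹) ^ 2 * (specNorm Q)⁻¹) (specNorm Q)) :
    ∀ α ∈ Set.Icc (0 : ℝ) αinf,
      qOpNorm Q (1 - α • A) ^ 2 ≤ 1 - a * α ∧ α * a ≤ 1 / 2 := by
  obtain ⟨S, hSymm, hSS, hinv⟩ := LyapAux.exists_sqrt hQpos
  rintro α ⟨hα0, hαle⟩
  rw [hα] at hαle
  have hα1 : α ≤ (1/2) * ((qOpNorm Q A)⁻¹) ^ 2 * (specNorm Q)⁻¹ :=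
    le_trans hαle (min_le_left _ _)
  have hα2 : α ≤ specNorm Q := le_trans hαle (min_le_right _ _)
  have hspec0 : (0:ℝ) ≤ specNorm Q := norm_nonneg _
  have hK0 : (0:ℝ) ≤ qOpNorm Q A := LyapAux.qOpNorm_nonneg A
  -- second part
  have hpart2 : α * a ≤ 1 / 2 := by
    rcases eq_or_lt_of_le hspec0 with h | h
    · have hz : α = 0 := le_antisymm (h ▸ hα2) hα0
      rw [hz, zero_mul]; norm_num
    · have h1 : α * (specNorm Q)⁻¹ ≤ specNorm Q * (specNorm Q)⁻¹ :=
        mul_le_mul_of_nonneg_right hα2 (inv_nonneg.2 hspec0)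
      rw [mul_inv_cancel₀ (ne_of_gt h)] at h1
      rw [ha]
      nlinarith
  have h1aα : (0:ℝ) ≤ 1 - a * α := by nlinarith
  -- key pointwise bound
  have key : ∀ x : Fin d → ℝ, qVecNorm Q x = 1 →
      qVecNorm Q ((1 - α • A).mulVec x) ≤ Real.sqrt (1 - a * α) := by
    intro x hx
    have hx1 : x ⬝ᵥ Q.mulVec x = 1 := by
      rw [qVecNorm, Real.sqrt_eq_one] at hx; exact hx
    have hQxx := LyapAux.dot_mulVec_le_spec Q x
    rw [hx1] at hQxx
    have hspecpos : (0:ℝ) < specNorm Q := by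
      rcases eq_or_lt_of_le hspec0 with h | h
      · exfalso; nlinarith [LyapAux.dot_self_nonneg x]
      · exact h
    have hxx : (specNorm Q)⁻¹ ≤ x ⬝ᵥ x := by
      have h1 : (specNorm Q)⁻¹ * 1 ≤ (specNorm Q)⁻¹ * (specNorm Q * (x ⬝ᵥ x)) :=
        mul_le_mul_of_nonneg_left hQxx (inv_nonneg.2 hspec0)
      rw [mul_one, ← mul_assoc, inv_mul_cancel₀ (ne_of_gt hspecpos), one_mul] at h1
      exact h1
    set y := A.mulVec x with hy
    have hAx : qVecNorm Q y ≤ qOpNorm Q A := LyapAux.le_qOpNorm hSymm hSS hinv A hx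
    have hyQy0 : (0:ℝ) ≤ y ⬝ᵥ Q.mulVec y := by
      have := hQpos.posSemidef.dotProduct_mulVec_nonneg y
      simpa using this
    have hAx2 : y ⬝ᵥ Q.mulVec y ≤ (qOpNorm Q A) ^ 2 := by
      have h2 : qVecNorm Q y ^ 2 ≤ (qOpNorm Q A) ^ 2 :=
        pow_le_pow_left₀ (Real.sqrt_nonneg _) hAx 2
      rwa [qVecNorm, Real.sq_sqrt hyQy0] at h2
    -- cross term
    have hcross : y ⬝ᵥ Q.mulVec x + x ⬝ᵥ Q.mulVec y = x ⬝ᵥ x := by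
      have h1 : y ⬝ᵥ Q.mulVec x = x ⬝ᵥ (Aᵀ * Q).mulVec x := by
        rw [hy, ← vecMul_transpose, dotProduct_mulVec, vecMul_vecMul, ← dotProduct_mulVec]
      have h2 : x ⬝ᵥ Q.mulVec y = x ⬝ᵥ (Q * A).mulVec x := by
        rw [hy, mulVec_mulVec]
      rw [h1, h2, ← dotProduct_add, ← add_mulVec, hLyap, one_mulVec]
    -- expansion
    have hv : (1 - α • A).mulVec x = x - α • y := by
      rw [sub_mulVec, one_mulVec, smul_mulVec, hy]
    have hvQv : ((1 - α • A).mulVec x) ⬝ᵥ Q.mulVec ((1 - α • A).mulVec x)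
        = 1 - α * (x ⬝ᵥ x) + α ^ 2 * (y ⬝ᵥ Q.mulVec y) := by
      simp only [hv, mulVec_sub, mulVec_smul, sub_dotProduct, dotProduct_sub,
        smul_dotProduct, dotProduct_smul, smul_eq_mul]
      linear_combination hx1 - α * hcross
    have hαK : α * (qOpNorm Q A) ^ 2 ≤ (1/2) * (specNorm Q)⁻¹ := by
      rcases eq_or_lt_of_le hK0 with h | h
      · rw [← h]; norm_num; positivity
      · have hKK : ((qOpNorm Q A)⁻¹) ^ 2 * (qOpNorm Q A) ^ 2 = 1 := by
          field_simp
        calc α * (qOpNorm Q A) ^ 2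
            ≤ ((1/2) * ((qOpNorm Q A)⁻¹) ^ 2 * (specNorm Q)⁻¹) * (qOpNorm Q A) ^ 2 :=
              mul_le_mul_of_nonneg_right hα1 (sq_nonneg _)
          _ = (1/2) * (specNorm Q)⁻¹ * (((qOpNorm Q A)⁻¹) ^ 2 * (qOpNorm Q A) ^ 2) := by ring
          _ = (1/2) * (specNorm Q)⁻¹ := by rw [hKK, mul_one]
    have hbound : ((1 - α • A).mulVec x) ⬝ᵥ Q.mulVec ((1 - α • A).mulVec x) ≤ 1 - a * α := by
      rw [hvQv, ha]
      nlinarith [mul_le_mul_of_nonneg_left hxx hα0, mul_le_mul_of_nonneg_left hAx2 hα0,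
        mul_le_mul_of_nonneg_left hαK hα0]
    rw [qVecNorm]
    exact Real.sqrt_le_sqrt hbound
  have hop : qOpNorm Q (1 - α • A) ≤ Real.sqrt (1 - a * α) :=
    LyapAux.qOpNorm_le (Real.sqrt_nonneg _) key
  constructor
  · have h2 : qOpNorm Q (1 - α • A) ^ 2 ≤ Real.sqrt (1 - a * α) ^ 2 :=
      pow_le_pow_left₀ (LyapAux.qOpNorm_nonneg _) hop 2
    rwa [Real.sq_sqrt h1aα] at h2
  · exact hpart2
end

section
/- Let $(Z_k)$ be i.i.d. and assume the noise function $\varepsilon: \mathsf{Z} \to \mathbb{R}^d$ satisfies $\mathbb{E}[\varepsilon(Z_1)] = 0$ and $\sup_z \|\varepsilon(z)\| \le \|\varepsilon\|_\infty < \infty$. Define $J_n^{(0)} = -\alpha \sum_{j=1}^n (I - \alpha\bar{A})^{n-j}\varepsilon(Z_j)$ with $-\bar{A}$ Hurwitz and Lyapunov data $(Q,a,\alpha_\infty)$. Then for any $\alpha \in (0,\alpha_\infty]$, $p \ge 2$, $n \ge 0$: $\mathbb{E}^{1/p}[\|J_n^{(0)}\|^p] \le \frac{\sqrt{2\kappa_Q}}{a}\sqrt{\alpha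 a p}\,\|\varepsilon\|_\infty$. -/
open MeasureTheory ProbabilityTheory Matrix

section Aux

open MeasureTheory RealInnerProductSpace

local notation "E" d => EuclideanSpace ℝ (Fin d)

-- chord bound for convex pow
lemma chord_pow (m : ℕ) (A c u : ℝ) (hc : 0 < c) (hAc : 2*c ≤ A) (hu : |u| ≤ c) :
    (A + 2*u)^m ≤ ((c-u)/(2*c)) * (A - 2*c)^m + ((c+u)/(2*c)) * (A + 2*c)^m := by
  have h1 : (0:ℝ) ≤ (c-u)/(2*c) := by
    apply div_nonneg _ (by linarith)
    rw [abs_le] at hu; linarith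
  have h2 : (0:ℝ) ≤ (c+u)/(2*c) := by
    apply div_nonneg _ (by linarith)
    rw [abs_le] at hu; linarith
  have h3 : (c-u)/(2*c) + (c+u)/(2*c) = 1 := by field_simp; ring
  have hx : (A - 2*c) ∈ Set.Ici (0:ℝ) := by simp; linarith
  have hy : (A + 2*c) ∈ Set.Ici (0:ℝ) := by simp; linarith
  have := (convexOn_pow m).2 hx hy h1 h2 h3
  simp only [smul_eq_mul] at this
  have harg : (c-u)/(2*c) * (A - 2*c) + (c+u)/(2*c) * (A + 2*c) = A + 2*u := by
    field_simp
    ring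
  rw [harg] at this
  simpa using this

lemma inner_bound {d : ℕ} (ν : Measure (EuclideanSpace ℝ (Fin d))) [IsProbabilityMeasure ν]
    (b : ℝ) (hb : ∀ᵐ x ∂ν, ‖x‖ ≤ b) (hmean : ∫ x, x ∂ν = 0) (m : ℕ)
    (t : EuclideanSpace ℝ (Fin d)) :
    ∫ x, ‖t + x‖^(2*m) ∂ν ≤ ((‖t‖+b)^(2*m) + (‖t‖-b)^(2*m))/2 := by
  have hb0 : 0 ≤ b := by
    have : ∃ x, ‖x‖ ≤ b := hb.exists
    rcases this with ⟨x, hx⟩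
    exact le_trans (norm_nonneg x) hx
  have hid : Integrable (fun x : EuclideanSpace ℝ (Fin d) => x) ν := by
    refine ⟨aestronglyMeasurable_id, ?_⟩
    exact MeasureTheory.HasFiniteIntegral.of_bounded (C := b) hb
  have hInt : Integrable (fun x : EuclideanSpace ℝ (Fin d) => ‖t + x‖^(2*m)) ν := by
    refine ⟨(continuous_const.add continuous_id).norm.pow _ |>.aestronglyMeasurable, ?_⟩
    apply MeasureTheory.HasFiniteIntegral.of_bounded (C := (‖t‖ + b)^(2*m))
    filter_upwards [hb] with x hx
    rw [Real.norm_eq_abs, abs_of_nonneg (by positivity)]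
    apply pow_le_pow_left₀ (norm_nonneg _)
    exact le_trans (norm_add_le _ _) (by linarith)
  by_cases hbz : b = 0
  · subst hbz
    have hae : ∀ᵐ x ∂ν, ‖t + x‖^(2*m) = ((‖t‖+0)^(2*m) + (‖t‖-0)^(2*m))/2 := by
      filter_upwards [hb] with x hx
      have : x = 0 := by
        rw [← norm_le_zero_iff]; exact hx
      rw [this]
      simp
    rw [integral_congr_ae hae, integral_const]
    simp
  have hbpos : 0 < b := lt_of_le_of_ne hb0 (Ne.symm hbz)
  by_cases htz : t = 0
  · subst htz
    have : ∫ x, ‖(0:EuclideanSpace ℝ (Fin d)) + x‖^(2*m) ∂ν ≤ b^(2*m) := by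
      rw [show (b:ℝ)^(2*m) = ∫ _x, b^(2*m) ∂ν by simp]
      apply integral_mono_ae hInt (integrable_const _)
      filter_upwards [hb] with x hx
      simp only [zero_add]
      exact pow_le_pow_left₀ (norm_nonneg _) hx _
    refine le_trans this ?_
    have : ((-b)^(2*m) : ℝ) = b^(2*m) := Even.neg_pow (even_two_mul m) b
    simp only [norm_zero, zero_add, zero_sub]
    rw [this]
    linarith
  -- main case
  have htpos : 0 < ‖t‖ := norm_pos_iff.2 htz
  set c := ‖t‖ * b with hc
  have hcpos : 0 < c := mul_pos htpos hbpos
  set A := ‖t‖^2 + b^2 with hA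
  have hAc : 2*c ≤ A := by
    have := sq_nonneg (‖t‖ - b); nlinarith
  -- pointwise bound
  have hpt : ∀ᵐ x ∂ν, ‖t + x‖^(2*m) ≤
      ((c - (inner ℝ t x : ℝ))/(2*c)) * (A - 2*c)^m + ((c + (inner ℝ t x : ℝ))/(2*c)) * (A + 2*c)^m := by
    filter_upwards [hb] with x hx
    have h1 : ‖t + x‖^(2*m) = (‖t + x‖^2)^m := by rw [← pow_mul]
    have h2 : ‖t + x‖^2 ≤ A + 2*(inner ℝ t x : ℝ) := by
      rw [norm_add_sq_real]
      have : ‖x‖^2 ≤ b^2 := pow_le_pow_left₀ (norm_nonneg _) hx _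
      rw [hA]; linarith
    have h3 : |(inner ℝ t x : ℝ)| ≤ c := by
      refine le_trans (abs_real_inner_le_norm t x) ?_
      rw [hc]
      exact mul_le_mul_of_nonneg_left hx (norm_nonneg t)
    calc ‖t + x‖^(2*m) = (‖t + x‖^2)^m := h1
      _ ≤ (A + 2*(inner ℝ t x : ℝ))^m := pow_le_pow_left₀ (sq_nonneg _) h2 m
      _ ≤ _ := chord_pow m A c ((inner ℝ t x : ℝ)) hcpos hAc h3
  -- integrate
  have hinner_int : Integrable (fun x => (inner ℝ t x : ℝ)) ν := by
    refine ⟨((innerSL ℝ t).continuous).aestronglyMeasurable, ?_⟩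
    apply MeasureTheory.HasFiniteIntegral.of_bounded (C := ‖t‖ * b)
    filter_upwards [hb] with x hx
    rw [Real.norm_eq_abs]
    exact le_trans (abs_real_inner_le_norm t x) (mul_le_mul_of_nonneg_left hx (norm_nonneg t))
  have hmean' : ∫ x, (inner ℝ t x : ℝ) ∂ν = 0 := by
    have h2 := integral_inner (𝕜 := ℝ) hid t
    rw [hmean, inner_zero_right] at h2
    exact h2
  have hRHSint : Integrable (fun x =>
      ((c - (inner ℝ t x : ℝ))/(2*c)) * (A - 2*c)^m + ((c + (inner ℝ t x : ℝ))/(2*c)) * (A + 2*c)^m) ν := by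
    apply Integrable.add
    · exact (((integrable_const c).sub hinner_int).div_const _).mul_const _
    · exact (((integrable_const c).add hinner_int).div_const _).mul_const _
  calc ∫ x, ‖t + x‖^(2*m) ∂ν
      ≤ ∫ x, (((c - (inner ℝ t x : ℝ))/(2*c)) * (A - 2*c)^m + ((c + (inner ℝ t x : ℝ))/(2*c)) * (A + 2*c)^m) ∂ν :=
        integral_mono_ae hInt hRHSint hpt
    _ = ((A - 2*c)^m + (A + 2*c)^m)/2 := by
        have hfe : ∀ x : EuclideanSpace ℝ (Fin d),
            (c - (inner ℝ t x : ℝ))/(2*c) * (A - 2*c)^m + (c + (inner ℝ t x : ℝ))/(2*c) * (A + 2*c)^m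
            = ((A - 2*c)^m + (A + 2*c)^m)/2
              + (inner ℝ t x : ℝ) * (((A + 2*c)^m - (A - 2*c)^m)/(2*c)) := by
          intro x
          field_simp
          ring
        simp_rw [hfe]
        rw [integral_add (integrable_const _) (hinner_int.mul_const _),
          integral_const, integral_mul_const, hmean']
        simp
    _ = ((‖t‖+b)^(2*m) + (‖t‖-b)^(2*m))/2 := by
        have e1 : A - 2*c = (‖t‖ - b)^2 := by rw [hA, hc]; ring
        have e2 : A + 2*c = (‖t‖ + b)^2 := by rw [hA, hc]; ring
        rw [e1, e2, ← pow_mul, ← pow_mul]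
        ring


lemma coeff_ineq (m : ℕ) : ∀ l, l ≤ m →
    (2*m).choose (2*l) * (2^(m-l) * (m-l).factorial) ≤ 2^m * m.factorial * m.choose l := by
  intro l
  induction l with
  | zero => intro _; simp
  | succ l ih =>
    intro hl
    have hlm : l < m := hl
    have hIH := ih (le_of_lt hlm)
    -- identities
    have h1 : (2*m).choose (2*l+1) * (2*l+1) = (2*m).choose (2*l) * (2*m - 2*l) :=
      Nat.choose_succ_right_eq _ _
    have h2 : (2*m).choose (2*l+2) * (2*l+2) = (2*m).choose (2*l+1) * (2*m - (2*l+1)) :=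
      Nat.choose_succ_right_eq _ _
    have h3 : m.choose (l+1) * (l+1) = m.choose l * (m - l) := Nat.choose_succ_right_eq _ _
    obtain ⟨j, hj⟩ : ∃ j, m = l + 1 + j := ⟨m - (l+1), by omega⟩
    subst hj
    -- rewrite subtractions
    have e1 : 2*(l+1+j) - 2*l = 2*j+2 := by omega
    have e2 : 2*(l+1+j) - (2*l+1) = 2*j+1 := by omega
    have e3 : l+1+j - l = j+1 := by omega
    have e4 : l+1+j - (l+1) = j := by omega
    rw [e1] at h1; rw [e2] at h2; rw [e3] at h3
    rw [e4] at *
    rw [e3] at hIH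
    -- goal : (2*(l+1+j)).choose (2*l+2) * (2^j * j.factorial) ≤ 2^(l+1+j) * (l+1+j).factorial * (l+1+j).choose (l+1)
    have key : (2*(l+1+j)).choose (2*(l+1)) * (2^j * Nat.factorial j)
        * ((2*l+2)*(2*l+1)*(l+1)*(2*(j+1)))
        ≤ 2^(l+1+j) * (l+1+j).factorial * ((l+1+j).choose (l+1))
        * ((2*l+2)*(2*l+1)*(l+1)*(2*(j+1))) := by
      have expand : (2*(l+1+j)).choose (2*(l+1)) * (2^j * Nat.factorial j)
          * ((2*l+2)*(2*l+1)*(l+1)*(2*(j+1)))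
          = ((2*(l+1+j)).choose (2*l) * (2^(j+1) * Nat.factorial (j+1)))
            * ((2*j+2)*(2*j+1)*(l+1)) := by
        have h12 : (2*(l+1+j)).choose (2*(l+1)) * ((2*l+2)*(2*l+1))
            = (2*(l+1+j)).choose (2*l) * ((2*j+2)*(2*j+1)) := by
          have : 2*(l+1) = 2*l+2 := by ring
          rw [this]
          calc (2*(l+1+j)).choose (2*l+2) * ((2*l+2)*(2*l+1))
              = ((2*(l+1+j)).choose (2*l+2) * (2*l+2)) * (2*l+1) := by ring
            _ = ((2*(l+1+j)).choose (2*l+1) * (2*j+1)) * (2*l+1) := by rw [h2]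
            _ = ((2*(l+1+j)).choose (2*l+1) * (2*l+1)) * (2*j+1) := by ring
            _ = ((2*(l+1+j)).choose (2*l) * (2*j+2)) * (2*j+1) := by rw [h1]
            _ = _ := by ring
        calc (2*(l+1+j)).choose (2*(l+1)) * (2^j * Nat.factorial j)
              * ((2*l+2)*(2*l+1)*(l+1)*(2*(j+1)))
            = ((2*(l+1+j)).choose (2*(l+1)) * ((2*l+2)*(2*l+1)))
              * ((2^j * Nat.factorial j) * (l+1) * (2*(j+1))) := by ring
          _ = ((2*(l+1+j)).choose (2*l) * ((2*j+2)*(2*j+1)))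
              * ((2^j * Nat.factorial j) * (l+1) * (2*(j+1))) := by rw [h12]
          _ = ((2*(l+1+j)).choose (2*l) * (2^(j+1) * ((j+1) * Nat.factorial j)))
              * ((2*j+2)*(2*j+1)*(l+1)) := by ring
          _ = _ := by rw [Nat.factorial_succ]
      rw [expand]
      calc ((2*(l+1+j)).choose (2*l) * (2^(j+1) * Nat.factorial (j+1))) * ((2*j+2)*(2*j+1)*(l+1))
          ≤ (2^(l+1+j) * (l+1+j).factorial * (l+1+j).choose l) * ((2*j+2)*(2*j+1)*(l+1)) :=
            Nat.mul_le_mul_right _ hIH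
        _ ≤ (2^(l+1+j) * (l+1+j).factorial * (l+1+j).choose l) * ((j+1)*((2*l+2)*(2*l+1)*(2*(j+1)))) := by
            apply Nat.mul_le_mul_left
            have hstep : 2*j+1 ≤ (2*l+1)*(2*(j+1)) := by nlinarith
            calc (2*j+2)*(2*j+1)*(l+1) ≤ (2*j+2)*((2*l+1)*(2*(j+1)))*(l+1) := by
                  exact Nat.mul_le_mul_right _ (Nat.mul_le_mul_left _ hstep)
              _ = (j+1)*((2*l+2)*(2*l+1)*(2*(j+1))) := by ring
        _ = (2^(l+1+j) * (l+1+j).factorial * ((l+1+j).choose l * (j+1)))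
              * ((2*l+2)*(2*l+1)*(2*(j+1))) := by ring
        _ = (2^(l+1+j) * (l+1+j).factorial * ((l+1+j).choose (l+1) * (l+1)))
              * ((2*l+2)*(2*l+1)*(2*(j+1))) := by rw [h3]
        _ = _ := by ring
    have hpos : 0 < (2*l+2)*(2*l+1)*(l+1)*(2*(j+1)) := by positivity
    have := Nat.le_of_mul_le_mul_right key hpos
    calc (2*(l+1+j)).choose (2*(l+1)) * (2^j * j.factorial) ≤ _ := this
      _ = 2^(l+1+j) * (l+1+j).factorial * (l+1+j).choose (l+1) := rfl

lemma even_id (m : ℕ) (x y : ℝ) :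
    (x+y)^(2*m) + (x-y)^(2*m)
      = 2 * ∑ l ∈ Finset.range (m+1), ((2*m).choose (2*l) : ℝ) * x^(2*l) * y^(2*(m-l)) := by
  rw [sub_eq_add_neg, add_pow, add_pow, ← Finset.sum_add_distrib]
  have hcongr : ∀ k ∈ Finset.range (2*m+1),
      x ^ k * y ^ (2*m - k) * ((2*m).choose k : ℝ)
        + x ^ k * (-y) ^ (2*m - k) * ((2*m).choose k : ℝ)
      = if Even k then 2 * (x ^ k * y ^ (2*m-k) * ((2*m).choose k : ℝ)) else 0 := by
    intro k hk
    rw [Finset.mem_range] at hk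
    rcases Nat.even_or_odd k with he | ho
    · have : Even (2*m - k) := by
        rcases he with ⟨c, hc⟩; exact ⟨m - c, by omega⟩
      rw [Even.neg_pow this, if_pos he]; ring
    · have : Odd (2*m - k) := by
        rcases ho with ⟨c, hc⟩; exact ⟨m - c - 1, by omega⟩
      rw [Odd.neg_pow this, if_neg (by simpa using ho)]; ring
  rw [Finset.sum_congr rfl hcongr, ← Finset.sum_filter, Finset.mul_sum]
  refine Finset.sum_nbij' (fun k => k / 2) (fun l => 2 * l) ?_ ?_ ?_ ?_ ?_
  · intro k hk
    simp only [Finset.mem_filter, Finset.mem_range] at hk ⊢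
    omega
  · intro l hl
    simp only [Finset.mem_filter, Finset.mem_range] at hl ⊢
    constructor; · omega
    · exact ⟨l, by ring⟩
  · intro k hk
    simp only [Finset.mem_filter, Finset.mem_range] at hk
    rcases hk.2 with ⟨c, hc⟩
    show 2 * (k / 2) = k
    omega
  · intro l _
    show 2 * l / 2 = l
    omega
  · intro k hk
    simp only [Finset.mem_filter, Finset.mem_range] at hk
    rcases hk.2 with ⟨c, hc⟩
    have h1 : 2 * (k / 2) = k := by omega
    have h2 : 2 * (m - k / 2) = 2*m - k := by omega
    rw [h1, h2]; ring

open ProbabilityTheory in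
lemma step_bound {d : ℕ} {Ω : Type*} [MeasurableSpace Ω] (μ : Measure Ω) [IsProbabilityMeasure μ]
    (T X : Ω → EuclideanSpace ℝ (Fin d)) (hT : Measurable T) (hX : Measurable X)
    (hTX : IndepFun T X μ) (c b : ℝ) (hTb : ∀ ω, ‖T ω‖ ≤ c) (hXb : ∀ ω, ‖X ω‖ ≤ b)
    (hXm : ∫ ω, X ω ∂μ = 0) (m : ℕ) :
    ∫ ω, ‖T ω + X ω‖^(2*m) ∂μ ≤
      ∑ l ∈ Finset.range (m+1), ((2*m).choose (2*l) : ℝ) * b^(2*l) * (∫ ω, ‖T ω‖^(2*(m-l)) ∂μ) := by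
  classical
  set τ := Measure.map T μ with hτ
  set ν := Measure.map X μ with hν
  have hτP : IsProbabilityMeasure τ := Measure.isProbabilityMeasure_map hT.aemeasurable
  have hνP : IsProbabilityMeasure ν := Measure.isProbabilityMeasure_map hX.aemeasurable
  have hmap : Measure.map (fun ω => (T ω, X ω)) μ = τ.prod ν :=
    (indepFun_iff_map_prod_eq_prod_map_map hT.aemeasurable hX.aemeasurable).1 hTX
  have hτb : ∀ᵐ t ∂τ, ‖t‖ ≤ c := by
    rw [hτ, MeasureTheory.ae_map_iff hT.aemeasurable
      (measurableSet_le measurable_norm measurable_const)]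
    exact Filter.Eventually.of_forall hTb
  have hνb : ∀ᵐ x ∂ν, ‖x‖ ≤ b := by
    rw [hν, MeasureTheory.ae_map_iff hX.aemeasurable
      (measurableSet_le measurable_norm measurable_const)]
    exact Filter.Eventually.of_forall hXb
  have hνm : ∫ x, x ∂ν = 0 := by
    rw [hν, MeasureTheory.integral_map hX.aemeasurable
      measurable_id'.aestronglyMeasurable]
    exact hXm
  have hne : Nonempty Ω := by
    by_contra h
    rw [not_nonempty_iff] at h
    have h1 : μ Set.univ = 1 := measure_univ
    rw [Set.univ_eq_empty_iff.mpr h, measure_empty] at h1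
    exact zero_ne_one h1
  have hb0 : 0 ≤ b := le_trans (norm_nonneg _) (hXb (Classical.choice hne))
  have hc0 : 0 ≤ c := le_trans (norm_nonneg _) (hTb (Classical.choice hne))
  -- continuity/measurability of the function on the product
  have hFcont : Continuous (fun q : (EuclideanSpace ℝ (Fin d)) × (EuclideanSpace ℝ (Fin d)) =>
      ‖q.1 + q.2‖^(2*m)) := ((continuous_fst.add continuous_snd).norm).pow _
  have hprodP : IsProbabilityMeasure (τ.prod ν) := by infer_instance
  have haeprod : ∀ᵐ q ∂(τ.prod ν), ‖q.1‖ ≤ c ∧ ‖q.2‖ ≤ b := by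
    rw [MeasureTheory.Measure.ae_prod_iff_ae_ae]
    · filter_upwards [hτb] with t ht
      filter_upwards [hνb] with x hx
      exact ⟨ht, hx⟩
    · exact ((measurableSet_le (measurable_norm.comp measurable_fst) measurable_const).inter
        (measurableSet_le (measurable_norm.comp measurable_snd) measurable_const))
  have hFint : Integrable (fun q : (EuclideanSpace ℝ (Fin d)) × (EuclideanSpace ℝ (Fin d)) =>
      ‖q.1 + q.2‖^(2*m)) (τ.prod ν) := by
    refine ⟨hFcont.aestronglyMeasurable, ?_⟩
    apply MeasureTheory.HasFiniteIntegral.of_bounded (C := (c + b)^(2*m))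
    filter_upwards [haeprod] with q hq
    rw [Real.norm_eq_abs, abs_of_nonneg (by positivity)]
    exact pow_le_pow_left₀ (norm_nonneg _) (le_trans (norm_add_le _ _) (by linarith [hq.1, hq.2])) _
  -- rewrite as iterated integral
  have step1 : ∫ ω, ‖T ω + X ω‖^(2*m) ∂μ = ∫ t, ∫ x, ‖t + x‖^(2*m) ∂ν ∂τ := by
    have e1 : ∫ ω, ‖T ω + X ω‖^(2*m) ∂μ
        = ∫ q, ‖q.1 + q.2‖^(2*m) ∂(Measure.map (fun ω => (T ω, X ω)) μ) := by
      rw [integral_map (hT.prodMk hX).aemeasurable hFcont.aestronglyMeasurable]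
    rw [e1, hmap, MeasureTheory.integral_prod _ hFint]
  rw [step1]
  -- bound inner integral
  have hGint : Integrable (fun t => ((‖t‖+b)^(2*m) + (‖t‖-b)^(2*m))/2) τ := by
    refine ⟨((((continuous_norm.add continuous_const).pow _).add
      ((continuous_norm.sub continuous_const).pow _)).div_const _).aestronglyMeasurable, ?_⟩
    apply MeasureTheory.HasFiniteIntegral.of_bounded (C := ((c+b)^(2*m) + (c+b)^(2*m))/2)
    filter_upwards [hτb] with t ht
    rw [Real.norm_eq_abs, abs_of_nonneg (div_nonneg (add_nonneg (by positivity)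
      ((even_two_mul m).pow_nonneg _)) (by norm_num))]
    have h1 : (‖t‖+b)^(2*m) ≤ (c+b)^(2*m) := pow_le_pow_left₀ (by positivity) (by linarith) _
    have h2 : (‖t‖-b)^(2*m) ≤ (c+b)^(2*m) := by
      rw [← Even.pow_abs (even_two_mul m) (‖t‖ - b)]
      refine pow_le_pow_left₀ (abs_nonneg _) ?_ _
      rw [abs_le]
      constructor <;> [linarith [norm_nonneg t]; linarith [hTb]]
    linarith
  have hnormint : ∀ k : ℕ, Integrable (fun t : EuclideanSpace ℝ (Fin d) => ‖t‖^k) τ := by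
    intro k
    refine ⟨(continuous_norm.pow _).aestronglyMeasurable, ?_⟩
    apply MeasureTheory.HasFiniteIntegral.of_bounded (C := c^k)
    filter_upwards [hτb] with t ht
    rw [Real.norm_eq_abs, abs_of_nonneg (by positivity)]
    exact pow_le_pow_left₀ (norm_nonneg _) ht _
  have hIntInner : Integrable (fun t => ∫ x, ‖t + x‖^(2*m) ∂ν) τ := by
    have := hFint.integral_prod_left
    simpa using this
  calc ∫ t, ∫ x, ‖t + x‖^(2*m) ∂ν ∂τ
      ≤ ∫ t, ((‖t‖+b)^(2*m) + (‖t‖-b)^(2*m))/2 ∂τ := by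
        refine integral_mono_ae hIntInner hGint ?_
        exact Filter.Eventually.of_forall (fun t => inner_bound ν b hνb hνm m t)
    _ = ∫ t, ∑ l ∈ Finset.range (m+1),
          ((2*m).choose (2*l) : ℝ) * b^(2*l) * ‖t‖^(2*(m-l)) ∂τ := by
        apply integral_congr_ae
        apply Filter.Eventually.of_forall
        intro t
        dsimp only
        have h1 : (‖t‖+b)^(2*m) = (b+‖t‖)^(2*m) := by rw [add_comm]
        have h2 : (‖t‖-b)^(2*m) = (b-‖t‖)^(2*m) := by
          rw [← neg_sub, Even.neg_pow (even_two_mul m)]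
        rw [h1, h2]
        have := even_id m b ‖t‖
        rw [this]
        ring
    _ = ∑ l ∈ Finset.range (m+1),
          ((2*m).choose (2*l) : ℝ) * b^(2*l) * (∫ t, ‖t‖^(2*(m-l)) ∂τ) := by
        rw [integral_finset_sum]
        · apply Finset.sum_congr rfl
          intro l _
          rw [integral_const_mul]
        · intro l _
          exact (hnormint _).const_mul _
    _ = ∑ l ∈ Finset.range (m+1),
          ((2*m).choose (2*l) : ℝ) * b^(2*l) * (∫ ω, ‖T ω‖^(2*(m-l)) ∂μ) := by
        apply Finset.sum_congr rfl
        intro l _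
        congr 1
        rw [hτ, integral_map (f := fun t : EuclideanSpace ℝ (Fin d) => ‖t‖ ^ (2*(m-l))) hT.aemeasurable (continuous_norm.pow _).aestronglyMeasurable]

open ProbabilityTheory in
lemma sum_even_moment_bound {d : ℕ} {Ω : Type*} [MeasurableSpace Ω]
    (μ : Measure Ω) [IsProbabilityMeasure μ]
    (W : ℕ → Ω → EuclideanSpace ℝ (Fin d)) (hWmeas : ∀ i, Measurable (W i))
    (hWindep : iIndepFun W μ)
    (b : ℕ → ℝ) (hWb : ∀ i ω, ‖W i ω‖ ≤ b i) (hWm : ∀ i, ∫ ω, W i ω ∂μ = 0)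
    (s : Finset ℕ) : ∀ m : ℕ,
    ∫ ω, ‖∑ j ∈ s, W j ω‖^(2*m) ∂μ ≤ 2^m * (m.factorial : ℝ) * (∑ j ∈ s, (b j)^2)^m := by
  classical
  have hne : Nonempty Ω := by
    by_contra h
    rw [not_nonempty_iff] at h
    have h1 : μ Set.univ = 1 := measure_univ
    rw [Set.univ_eq_empty_iff.mpr h, measure_empty] at h1
    exact zero_ne_one h1
  have hb0 : ∀ i, 0 ≤ b i := fun i =>
    le_trans (norm_nonneg _) (hWb i (Classical.choice hne))
  induction s using Finset.cons_induction with
  | empty =>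
    intro m
    rcases Nat.eq_zero_or_pos m with hm | hm
    · subst hm; simp
    · simp only [Finset.sum_empty]
      rw [norm_zero, zero_pow (by omega)]
      simp only [integral_zero]
      positivity
  | cons i s hi ih =>
    intro m
    set T : Ω → EuclideanSpace ℝ (Fin d) := fun ω => ∑ j ∈ s, W j ω with hTdef
    have hTmeas : Measurable T := Finset.measurable_sum s (fun j _ => hWmeas j)
    have hTX : IndepFun T (W i) μ := by
      have := hWindep.indepFun_finsetSum_of_notMem hWmeas hi
      have he : (∑ j ∈ s, W j) = T := by
        funext ω; rw [hTdef]; simp [Finset.sum_apply]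
      rwa [he] at this
    have hTb : ∀ ω, ‖T ω‖ ≤ ∑ j ∈ s, b j := by
      intro ω
      exact le_trans (norm_sum_le _ _) (Finset.sum_le_sum (fun j _ => hWb j ω))
    have hstep := step_bound μ T (W i) hTmeas (hWmeas i) hTX.symm.symm (∑ j ∈ s, b j) (b i)
      hTb (hWb i) (hWm i) m
    have hsum_eq : ∀ ω, ∑ j ∈ Finset.cons i s hi, W j ω = T ω + W i ω := by
      intro ω
      rw [Finset.sum_cons, hTdef, add_comm]
    calc ∫ ω, ‖∑ j ∈ Finset.cons i s hi, W j ω‖^(2*m) ∂μ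
        = ∫ ω, ‖T ω + W i ω‖^(2*m) ∂μ := by
          apply integral_congr_ae
          exact Filter.Eventually.of_forall (fun ω => by dsimp only; rw [hsum_eq ω])
      _ ≤ ∑ l ∈ Finset.range (m+1), ((2*m).choose (2*l) : ℝ) * (b i)^(2*l)
            * (∫ ω, ‖T ω‖^(2*(m-l)) ∂μ) := hstep
      _ ≤ ∑ l ∈ Finset.range (m+1), ((2*m).choose (2*l) : ℝ) * (b i)^(2*l)
            * (2^(m-l) * ((m-l).factorial : ℝ) * (∑ j ∈ s, (b j)^2)^(m-l)) := by
          apply Finset.sum_le_sum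
          intro l _
          apply mul_le_mul_of_nonneg_left (ih (m-l))
          exact mul_nonneg (Nat.cast_nonneg _) (pow_nonneg (hb0 i) _)
      _ ≤ ∑ l ∈ Finset.range (m+1), (2^m * (m.factorial : ℝ) * (m.choose l))
            * ((b i)^2)^l * (∑ j ∈ s, (b j)^2)^(m-l) := by
          apply Finset.sum_le_sum
          intro l hl
          rw [Finset.mem_range] at hl
          have hcast : ((2*m).choose (2*l) : ℝ) * (2^(m-l) * ((m-l).factorial : ℝ))
              ≤ 2^m * (m.factorial : ℝ) * (m.choose l) := by
            have := coeff_ineq m l (by omega)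
            have h2 := Nat.cast_le (α := ℝ) |>.mpr this
            push_cast at h2
            convert h2 using 1 <;> ring
          have hb2 : (b i)^(2*l) = ((b i)^2)^l := by rw [pow_mul]
          rw [hb2]
          calc ((2*m).choose (2*l) : ℝ) * ((b i)^2)^l
                * (2^(m-l) * ((m-l).factorial : ℝ) * (∑ j ∈ s, (b j)^2)^(m-l))
              = (((2*m).choose (2*l) : ℝ) * (2^(m-l) * ((m-l).factorial : ℝ)))
                * (((b i)^2)^l * (∑ j ∈ s, (b j)^2)^(m-l)) := by ring
            _ ≤ (2^m * (m.factorial : ℝ) * (m.choose l))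
                * (((b i)^2)^l * (∑ j ∈ s, (b j)^2)^(m-l)) := by
                apply mul_le_mul_of_nonneg_right hcast
                have h1 : (0:ℝ) ≤ ((b i)^2)^l := by positivity
                have h2 : (0:ℝ) ≤ (∑ j ∈ s, (b j)^2)^(m-l) := by positivity
                exact mul_nonneg h1 h2
            _ = (2^m * (m.factorial : ℝ) * (m.choose l)) * ((b i)^2)^l
                * (∑ j ∈ s, (b j)^2)^(m-l) := by ring
      _ = 2^m * (m.factorial : ℝ) * ∑ l ∈ Finset.range (m+1),
            ((b i)^2)^l * (∑ j ∈ s, (b j)^2)^(m-l) * (m.choose l) := by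
          rw [Finset.mul_sum]
          apply Finset.sum_congr rfl
          intro l _
          ring
      _ = 2^m * (m.factorial : ℝ) * (∑ j ∈ Finset.cons i s hi, (b j)^2)^m := by
          rw [Finset.sum_cons, add_pow]

open MeasureTheory

lemma rpow_moment_mono {Ω : Type*} [MeasurableSpace Ω] (μ : Measure Ω) [IsProbabilityMeasure μ]
    (f : Ω → ℝ) (hf : Measurable f) (hnn : ∀ ω, 0 ≤ f ω) (B : ℝ) (hB : ∀ ω, f ω ≤ B)
    (p : ℝ) (hp : 0 < p) (m : ℕ) (hm : 0 < m) (hpm : p ≤ 2*m) :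
    (∫ ω, f ω ^ p ∂μ) ^ (1/p) ≤ (∫ ω, f ω ^ (2*m) ∂μ) ^ (1/(2*(m:ℝ))) := by
  have hB0 : 0 ≤ B := by
    have hne : Nonempty Ω := by
      by_contra h
      rw [not_nonempty_iff] at h
      have h1 : μ Set.univ = 1 := measure_univ
      rw [Set.univ_eq_empty_iff.mpr h, measure_empty] at h1
      exact zero_ne_one h1
    exact le_trans (hnn (Classical.choice hne)) (hB (Classical.choice hne))
  have hIp : Integrable (fun ω => f ω ^ p) μ := by
    refine ⟨((Real.continuous_rpow_const (le_of_lt hp)).measurable.comp hf).aestronglyMeasurable, ?_⟩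
    apply MeasureTheory.HasFiniteIntegral.of_bounded (C := B ^ p)
    apply Filter.Eventually.of_forall
    intro ω
    rw [Real.norm_eq_abs, abs_of_nonneg (Real.rpow_nonneg (hnn ω) _)]
    exact Real.rpow_le_rpow (hnn ω) (hB ω) (le_of_lt hp)
  have hI2m : Integrable (fun ω => f ω ^ (2*m)) μ := by
    refine ⟨(hf.pow_const _).aestronglyMeasurable, ?_⟩
    apply MeasureTheory.HasFiniteIntegral.of_bounded (C := B ^ (2*m))
    apply Filter.Eventually.of_forall
    intro ω
    rw [Real.norm_eq_abs, abs_of_nonneg (pow_nonneg (hnn ω) _)]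
    exact pow_le_pow_left₀ (hnn ω) (hB ω) _
  have hIp0 : 0 ≤ ∫ ω, f ω ^ p ∂μ :=
    integral_nonneg (fun ω => Real.rpow_nonneg (hnn ω) _)
  have hI2m0 : 0 ≤ ∫ ω, f ω ^ (2*m) ∂μ :=
    integral_nonneg (fun ω => pow_nonneg (hnn ω) _)
  -- lintegral identities
  have lint_p : ∫⁻ ω, ‖f ω‖ₑ ^ p ∂μ = ENNReal.ofReal (∫ ω, f ω ^ p ∂μ) := by
    rw [MeasureTheory.ofReal_integral_eq_lintegral_ofReal hIp
      (Filter.Eventually.of_forall (fun ω => Real.rpow_nonneg (hnn ω) _))]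
    apply lintegral_congr
    intro ω
    rw [Real.enorm_eq_ofReal (hnn ω), ← ENNReal.ofReal_rpow_of_nonneg (hnn ω) (le_of_lt hp)]
  have lint_2m : ∫⁻ ω, ‖f ω‖ₑ ^ ((2*m : ℕ) : ℝ) ∂μ
      = ENNReal.ofReal (∫ ω, f ω ^ (2*m) ∂μ) := by
    rw [MeasureTheory.ofReal_integral_eq_lintegral_ofReal hI2m
      (Filter.Eventually.of_forall (fun ω => pow_nonneg (hnn ω) _))]
    apply lintegral_congr
    intro ω
    rw [Real.enorm_eq_ofReal (hnn ω), ← Real.rpow_natCast (f ω) (2*m),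
      ← ENNReal.ofReal_rpow_of_nonneg (hnn ω) (by positivity)]
  -- eLpNorm comparison
  have hmono := MeasureTheory.eLpNorm_le_eLpNorm_of_exponent_le
    (μ := μ) (f := f) (p := ENNReal.ofReal p) (q := ENNReal.ofReal ((2*m : ℕ) : ℝ))
    (ENNReal.ofReal_le_ofReal (by push_cast; linarith)) hf.aestronglyMeasurable
  rw [MeasureTheory.eLpNorm_eq_lintegral_rpow_enorm_toReal (by simp [hp]) (by simp),
    MeasureTheory.eLpNorm_eq_lintegral_rpow_enorm_toReal
      (by simp; push_cast; positivity) ENNReal.ofReal_ne_top] at hmono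
  rw [ENNReal.toReal_ofReal (le_of_lt hp), ENNReal.toReal_ofReal (by positivity)] at hmono
  rw [lint_p, lint_2m] at hmono
  -- pass to toReal
  have hne2 : (ENNReal.ofReal (∫ ω, f ω ^ (2*m) ∂μ)) ^ (1/((2*m : ℕ):ℝ)) ≠ ⊤ :=
    ENNReal.rpow_ne_top_of_nonneg (by positivity) ENNReal.ofReal_ne_top
  have := ENNReal.toReal_mono hne2 hmono
  rw [← ENNReal.toReal_rpow, ← ENNReal.toReal_rpow, ENNReal.toReal_ofReal hIp0,
    ENNReal.toReal_ofReal hI2m0] at this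
  convert this using 3
  push_cast
  ring

end Aux

set_option maxHeartbeats 2000000 in
/-- `p`-th moment bound for `J_n^{(0)} = -α ∑_{j=1}^n (I - α Ā)^{n-j} ε(Z_j)` under
i.i.d. bounded mean-zero noise:
`𝔼^{1/p}[‖J_n^{(0)}‖ᵖ] ≤ (√(2κ_Q)/a) √(αap) ‖ε‖_∞`. -/
theorem Jn0_moment_bound_iid {d : ℕ} {𝓩 Ω : Type*}
    [MeasurableSpace 𝓩] [MeasurableSpace Ω]
    (μ : Measure Ω) [IsProbabilityMeasure μ]
    (π : Measure 𝓩) [IsProbabilityMeasure π]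
    (Z : ℕ → Ω → 𝓩) (hZmeas : ∀ i, Measurable (Z i))
    (hlaw : ∀ i, Measure.map (Z i) μ = π)
    (hindep : iIndepFun Z μ)
    (ε : 𝓩 → EuclideanSpace ℝ (Fin d)) (hεmeas : Measurable ε)
    (εsup : ℝ) (hεbd : ∀ z, ‖ε z‖ ≤ εsup)
    (hεmean : ∫ z, ε z ∂π = 0)
    (Abar : Matrix (Fin d) (Fin d) ℝ) (a κ αinf : ℝ)
    (ha : 0 < a) (hκ : 1 ≤ κ)
    -- Lyapunov contraction data for `-Abar` Hurwitz
    (hcontr : ∀ α ∈ Set.Ioc (0 : ℝ) αinf, ∀ k : ℕ,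
      specNorm ((1 - α • Abar) ^ k) ≤ Real.sqrt κ * (1 - α * a) ^ ((k : ℝ) / 2))
    (haα : ∀ α ∈ Set.Ioc (0 : ℝ) αinf, α * a ≤ 1 / 2) :
    ∀ α ∈ Set.Ioc (0 : ℝ) αinf, ∀ p : ℝ, 2 ≤ p → ∀ n : ℕ,
      (∫ ω, ‖-(α • ∑ j ∈ Finset.Icc 1 n,
          Matrix.toEuclideanLin ((1 - α • Abar) ^ (n - j)) (ε (Z j ω)))‖ ^ p ∂μ) ^ (1 / p) ≤
        Real.sqrt (2 * κ) / a * Real.sqrt (α * a * p) * εsup := by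
  intro α hα p hp n
  obtain ⟨hα0, hαinf⟩ := hα
  have hαa : α * a ≤ 1 / 2 := haα α ⟨hα0, hαinf⟩
  have hαa0 : 0 < α * a := mul_pos hα0 ha
  set q : ℝ := 1 - α * a with hqdef
  have hq0 : 0 ≤ q := by rw [hqdef]; linarith
  have hq1 : q < 1 := by rw [hqdef]; linarith
  have h𝓩ne : Nonempty 𝓩 := by
    by_contra h
    rw [not_nonempty_iff] at h
    have h1 : π Set.univ = 1 := measure_univ
    rw [Set.univ_eq_empty_iff.mpr h, measure_empty] at h1
    exact zero_ne_one h1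
  have hεsup0 : 0 ≤ εsup := le_trans (norm_nonneg _) (hεbd (Classical.choice h𝓩ne))
  have hκ0 : (0:ℝ) ≤ κ := by linarith
  -- the continuous linear maps and the summands
  set L : ℕ → (EuclideanSpace ℝ (Fin d)) →L[ℝ] (EuclideanSpace ℝ (Fin d)) :=
    fun j => LinearMap.toContinuousLinearMap (Matrix.toEuclideanLin ((1 - α • Abar) ^ (n - j)))
    with hLdef
  set g : ℕ → 𝓩 → EuclideanSpace ℝ (Fin d) := fun j z => α • (L j) (ε z) with hgdef
  have hgmeas : ∀ j, Measurable (g j) := fun j =>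
    ((L j).continuous.measurable.comp hεmeas).const_smul α
  set W : ℕ → Ω → EuclideanSpace ℝ (Fin d) := fun j => g j ∘ Z j with hWdef
  have hWmeas : ∀ j, Measurable (W j) := fun j => (hgmeas j).comp (hZmeas j)
  have hWindep : iIndepFun W μ := hindep.comp g hgmeas
  set b : ℕ → ℝ := fun j => α * (Real.sqrt κ * q ^ (((n - j : ℕ) : ℝ) / 2) * εsup) with hbdef
  have hWb : ∀ j ω, ‖W j ω‖ ≤ b j := by
    intro j ω
    show ‖α • (L j) (ε (Z j ω))‖ ≤ α * (Real.sqrt κ * q ^ (((n - j : ℕ) : ℝ) / 2) * εsup)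
    rw [norm_smul, Real.norm_eq_abs, abs_of_pos hα0]
    apply mul_le_mul_of_nonneg_left _ (le_of_lt hα0)
    refine le_trans ((L j).le_opNorm (ε (Z j ω))) ?_
    have hop : ‖L j‖ ≤ Real.sqrt κ * q ^ (((n - j : ℕ) : ℝ) / 2) :=
      hcontr α ⟨hα0, hαinf⟩ (n - j)
    calc ‖L j‖ * ‖ε (Z j ω)‖
        ≤ (Real.sqrt κ * q ^ (((n - j : ℕ) : ℝ) / 2)) * ‖ε (Z j ω)‖ :=
          mul_le_mul_of_nonneg_right hop (norm_nonneg _)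
      _ ≤ (Real.sqrt κ * q ^ (((n - j : ℕ) : ℝ) / 2)) * εsup :=
          mul_le_mul_of_nonneg_left (hεbd _)
            (mul_nonneg (Real.sqrt_nonneg κ) (Real.rpow_nonneg hq0 _))
  have hWm : ∀ j, ∫ ω, W j ω ∂μ = 0 := by
    intro j
    have hint : Integrable (fun ω => ε (Z j ω)) μ :=
      ⟨(hεmeas.comp (hZmeas j)).aestronglyMeasurable,
        MeasureTheory.HasFiniteIntegral.of_bounded (C := εsup)
          (Filter.Eventually.of_forall fun ω => hεbd _)⟩
    have hπε : ∫ ω, ε (Z j ω) ∂μ = ∫ z, ε z ∂π := by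
      rw [← hlaw j, integral_map (hZmeas j).aemeasurable hεmeas.aestronglyMeasurable]
    calc ∫ ω, W j ω ∂μ = ∫ ω, α • (L j) (ε (Z j ω)) ∂μ := rfl
      _ = α • ∫ ω, (L j) (ε (Z j ω)) ∂μ := by rw [integral_smul]
      _ = α • (L j) (∫ ω, ε (Z j ω) ∂μ) := by
          rw [ContinuousLinearMap.integral_comp_comm (L j) hint]
      _ = 0 := by rw [hπε, hεmean, map_zero, smul_zero]
  -- variance proxy
  set σ2 : ℝ := ∑ j ∈ Finset.Icc 1 n, (b j)^2 with hσ2def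
  have hσ2nn : 0 ≤ σ2 := Finset.sum_nonneg (fun j _ => sq_nonneg _)
  have hb2 : ∀ j ∈ Finset.Icc 1 n, (b j)^2 = (α^2 * (κ * εsup^2)) * q^(n-j) := by
    intro j _
    have hsq : (q ^ (((n - j : ℕ):ℝ)/2))^2 = q^((n-j : ℕ)) := by
      rw [← Real.rpow_natCast (q ^ (((n-j : ℕ):ℝ)/2)) 2, ← Real.rpow_mul hq0,
        ← Real.rpow_natCast q (n-j)]
      congr 1
      push_cast
      ring
    show (α * (Real.sqrt κ * q ^ (((n - j : ℕ) : ℝ) / 2) * εsup))^2 = _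
    have : (α * (Real.sqrt κ * q ^ (((n - j : ℕ) : ℝ) / 2) * εsup))^2
        = α^2 * ((Real.sqrt κ)^2 * ((q ^ (((n - j : ℕ) : ℝ) / 2))^2 * εsup^2)) := by ring
    rw [this, Real.sq_sqrt hκ0, hsq]
    ring
  have hgeom : ∑ j ∈ Finset.Icc 1 n, q^(n-j) ≤ 1/(α*a) := by
    have he : ∑ j ∈ Finset.Icc 1 n, q^(n-j) = ∑ k ∈ Finset.range n, q^k := by
      refine Finset.sum_nbij' (fun j => n - j) (fun k => n - k) ?_ ?_ ?_ ?_ ?_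
      · intro j hj
        simp only [Finset.mem_Icc] at hj
        simp only [Finset.mem_range]
        omega
      · intro k hk
        simp only [Finset.mem_range] at hk
        simp only [Finset.mem_Icc]
        omega
      · intro j hj
        simp only [Finset.mem_Icc] at hj
        show n - (n - j) = j
        omega
      · intro k hk
        simp only [Finset.mem_range] at hk
        show n - (n - k) = k
        omega
      · intro j _
        rfl
    rw [he, geom_sum_eq (ne_of_lt hq1) n]
    have h3 : (q^n - 1)/(q-1) = (1 - q^n)/(1 - q) := by
      rw [div_eq_div_iff (by linarith) (by linarith)]
      ring
    rw [h3, show (1:ℝ) - q = α*a by rw [hqdef]; ring]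
    apply (div_le_div_iff_of_pos_right hαa0).mpr
    have := pow_nonneg hq0 n
    linarith
  have hσ2 : σ2 ≤ α*κ*εsup^2/a := by
    calc σ2 = ∑ j ∈ Finset.Icc 1 n, (α^2 * (κ * εsup^2)) * q^(n-j) :=
          Finset.sum_congr rfl hb2
      _ = (α^2 * (κ * εsup^2)) * ∑ j ∈ Finset.Icc 1 n, q^(n-j) := by
          rw [Finset.mul_sum]
      _ ≤ (α^2 * (κ * εsup^2)) * (1/(α*a)) :=
          mul_le_mul_of_nonneg_left hgeom (by positivity)
      _ = α*κ*εsup^2/a := by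
          field_simp
  -- even moment bound
  have hmom := sum_even_moment_bound μ W hWmeas hWindep b hWb hWm (Finset.Icc 1 n)
  -- rewrite the goal integrand
  have hSrw : ∀ ω, ‖-(α • ∑ j ∈ Finset.Icc 1 n,
      Matrix.toEuclideanLin ((1 - α • Abar) ^ (n - j)) (ε (Z j ω)))‖
      = ‖∑ j ∈ Finset.Icc 1 n, W j ω‖ := by
    intro ω
    rw [norm_neg, Finset.smul_sum]
    rfl
  have hgoal_eq : (∫ ω, ‖-(α • ∑ j ∈ Finset.Icc 1 n,
      Matrix.toEuclideanLin ((1 - α • Abar) ^ (n - j)) (ε (Z j ω)))‖ ^ p ∂μ)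
      = ∫ ω, ‖∑ j ∈ Finset.Icc 1 n, W j ω‖ ^ p ∂μ := by
    apply integral_congr_ae
    exact Filter.Eventually.of_forall (fun ω => congrArg (fun t : ℝ => t ^ p) (hSrw ω))
  rw [hgoal_eq]
  -- choose the even moment
  set m : ℕ := ⌈p/2⌉₊ with hmdef
  have hm0 : 0 < m := Nat.ceil_pos.2 (by linarith)
  have hp2m : p ≤ 2*m := by
    have := Nat.le_ceil (p/2)
    rw [← hmdef] at this
    linarith
  have hmp : (m:ℝ) ≤ p := by
    have h1 : (⌈p/2⌉₊ : ℝ) < p/2 + 1 := Nat.ceil_lt_add_one (by linarith)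
    rw [← hmdef] at h1
    linarith
  -- monotonicity of moments
  set B : ℝ := ∑ j ∈ Finset.Icc 1 n, b j with hBdef
  have hfmeas : Measurable (fun ω => ‖∑ j ∈ Finset.Icc 1 n, W j ω‖) :=
    (Finset.measurable_sum _ (fun j _ => hWmeas j)).norm
  have hfB : ∀ ω, ‖∑ j ∈ Finset.Icc 1 n, W j ω‖ ≤ B := fun ω =>
    le_trans (norm_sum_le _ _) (Finset.sum_le_sum (fun j _ => hWb j ω))
  have hmono := rpow_moment_mono μ (fun ω => ‖∑ j ∈ Finset.Icc 1 n, W j ω‖) hfmeas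
    (fun ω => norm_nonneg _) B hfB p (by linarith) m hm0 hp2m
  refine le_trans hmono ?_
  -- final numeric bound
  set R : ℝ := Real.sqrt (2 * κ) / a * Real.sqrt (α * a * p) * εsup with hRdef
  have hR0 : 0 ≤ R := by
    apply mul_nonneg (mul_nonneg (div_nonneg (Real.sqrt_nonneg _) (le_of_lt ha))
      (Real.sqrt_nonneg _)) hεsup0
  have hRsq : R^2 = 2*p*(α*κ*εsup^2/a) := by
    have h1 : Real.sqrt (2*κ) ^ 2 = 2*κ := Real.sq_sqrt (by linarith)
    have h2 : Real.sqrt (α*a*p) ^ 2 = α*a*p := Real.sq_sqrt (by positivity)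
    have h3 : R^2 = (Real.sqrt (2*κ))^2 * (Real.sqrt (α*a*p))^2 * εsup^2 / a^2 := by
      rw [hRdef]; ring
    rw [h3, h1, h2]
    field_simp
  have hV : ∫ ω, ‖∑ j ∈ Finset.Icc 1 n, W j ω‖ ^ (2*m) ∂μ ≤ R^(2*m) := by
    refine le_trans (hmom m) ?_
    have hfact : ((m.factorial : ℝ)) ≤ (m:ℝ)^m := by
      have := Nat.factorial_le_pow m
      exact_mod_cast this
    have hstep1 : 2^m * (m.factorial : ℝ) * σ2^m ≤ (2*m*σ2)^m := by
      rw [show ((2:ℝ)*m*σ2)^m = 2^m * (m:ℝ)^m * σ2^m by rw [mul_pow, mul_pow]]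
      apply mul_le_mul_of_nonneg_right _ (pow_nonneg hσ2nn m)
      apply mul_le_mul_of_nonneg_left hfact (by positivity)
    have hstep2 : ((2:ℝ)*m*σ2)^m ≤ (2*p*(α*κ*εsup^2/a))^m := by
      apply pow_le_pow_left₀ (by positivity)
      have hVmax0 : 0 ≤ α*κ*εsup^2/a := by positivity
      nlinarith [mul_le_mul_of_nonneg_left hσ2 (show (0:ℝ) ≤ 2*m by positivity),
        mul_le_mul_of_nonneg_right hmp (show (0:ℝ) ≤ 2*(α*κ*εsup^2/a) by positivity)]
    calc 2^m * (m.factorial : ℝ) * σ2^m ≤ (2*m*σ2)^m := hstep1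
      _ ≤ (2*p*(α*κ*εsup^2/a))^m := hstep2
      _ = (R^2)^m := by rw [hRsq]
      _ = R^(2*m) := by rw [← pow_mul]
  have hint2m0 : 0 ≤ ∫ ω, ‖∑ j ∈ Finset.Icc 1 n, W j ω‖ ^ (2*m) ∂μ :=
    integral_nonneg (fun ω => pow_nonneg (norm_nonneg _) _)
  calc (∫ ω, ‖∑ j ∈ Finset.Icc 1 n, W j ω‖ ^ (2*m) ∂μ) ^ (1/(2*(m:ℝ)))
      ≤ (R^(2*m)) ^ (1/(2*(m:ℝ))) :=
        Real.rpow_le_rpow hint2m0 hV (by positivity)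
    _ = R := by
        rw [← Real.rpow_natCast R (2*m), ← Real.rpow_mul hR0]
        rw [show ((2*m : ℕ) : ℝ) * (1/(2*(m:ℝ))) = 1 by
          push_cast
          field_simp]
        exact Real.rpow_one R
end
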